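/- Tick floats out of thunk up to cost refinement: every value-cost pair (x, nL) accepted by thunk (tick >> u) corresponds to a pair (x, nR) accepted by tick >> thunk u with the same value and nL <= nR; conversely every pair in thunk (tick >> u) with value Thunk v comes from a run of u, and moreover thunk (tick >> u) is a 'sub-computation' of tick >> thunk u in the sense: forall x nL, thunk (tick >> u) x nL -> exists nR, tick >> thunk u accepts (x, nR) with nL <= nR. -/
import Mathlib


namespace Clair

/-- The clairvoyance monad: sets of value-cost pairs. -/
def M (a : Type) : Type := a → Nat → Prop

def ret {a : Type} (x : a) : M a := fun y n => y = x ∧ n = 0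

def bind {a b : Type} (u : M a) (k : a → M b) : M b :=
  fun y n => ∃ x nx ny, u x nx ∧ k x y ny ∧ n = nx + ny

def tick : M Unit := fun _ n => n = 1

inductive T (a : Type) : Type
  | Thunk (v : a) : T a
  | Undefined : T a

def thunk {a : Type} (u : M a) : M (T a) := fun t n =>
  match t with
  | .Thunk v => u v n
  | .Undefined => n = 0

def forcing {a b : Type} (t : T a) (k : a → M b) : M b :=
  match t with
  | .Thunk v => k v
  | .Undefined => fun _ _ => False

/-- `t >>! s` is `t >> s` in the paper: `bind t (fun _ => s)`. -/
def seqM {a b : Type} (t : M a) (s : M b) : M b := bind t (fun _ => s)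

infixl:55 " >>! " => seqM

def pessimistic {a : Type} (u : M a) (r : a → Nat → Prop) : Prop :=
  ∀ x n, u x n → r x n

def optimistic {a : Type} (u : M a) (r : a → Nat → Prop) : Prop :=
  ∃ x n, u x n ∧ r x n

inductive listA (a : Type) : Type
  | NilA : listA a
  | ConsA (x : T a) (xs : T (listA a)) : listA a

/-- Lifting a relation through the thunk type `T` (for `less_defined`). -/
inductive LDT {a : Type} (ld : a → a → Prop) : T a → T a → Prop
  | undef : ∀ t, LDT ld T.Undefined t
  | thunk : ∀ {x y}, ld x y → LDT ld (T.Thunk x) (T.Thunk y)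

inductive less_defined {a : Type} : listA a → listA a → Prop
  | nil : less_defined .NilA .NilA
  | cons : ∀ {x y : T a} {xs ys : T (listA a)},
      LDT Eq x y → LDT less_defined xs ys →
      less_defined (.ConsA x xs) (.ConsA y ys)

def exactA {a : Type} : List a → listA a
  | [] => .NilA
  | x :: xs => .ConsA (.Thunk x) (.Thunk (exactA xs))

/-- Lifting a relation through `T` on the left only (for `is_approx`). -/
inductive TA {a b : Type} (R : a → b → Prop) : T a → b → Prop
  | undef : ∀ y, TA R T.Undefined y
  | thunk : ∀ {x y}, R x y → TA R (T.Thunk x) y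

inductive is_approx {a : Type} : listA a → List a → Prop
  | nil : is_approx .NilA []
  | cons : ∀ {xA : T a} {x : a} {xsA : T (listA a)} {xs : List a},
      TA Eq xA x → TA is_approx xsA xs →
      is_approx (.ConsA xA xsA) (x :: xs)

def sizeX' {a : Type} (n0 : Nat) : listA a → Nat
  | .NilA => n0
  | .ConsA _ (.Thunk xs) => sizeX' n0 xs + 1
  | .ConsA _ .Undefined => 1

def sizeX {a : Type} (n0 : Nat) : T (listA a) → Nat
  | .Thunk xs => sizeX' n0 xs
  | .Undefined => 0

def appendA_ {a : Type} : listA a → T (listA a) → M (listA a)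
  | .NilA, ysA => tick >>! forcing ysA ret
  | .ConsA x xs1, ysA =>
      tick >>! bind (thunk (match xs1 with
          | .Thunk xs1' => appendA_ xs1' ysA
          | .Undefined => fun _ _ => False))
        (fun t => ret (.ConsA x t))

def appendA {a : Type} (xsA ysA : T (listA a)) : M (listA a) :=
  forcing xsA (fun xs => appendA_ xs ysA)

def takeA_ {a : Type} : Nat → listA a → M (listA a)
  | 0, _ => tick >>! ret .NilA
  | _ + 1, .NilA => tick >>! ret .NilA
  | n + 1, .ConsA x xs1 =>
      tick >>! bind (thunk (match xs1 with
          | .Thunk xs1' => takeA_ n xs1'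
          | .Undefined => fun _ _ => False))
        (fun t => ret (.ConsA x t))

def takeA {a : Type} (n : Nat) (xsA : T (listA a)) : M (listA a) :=
  forcing xsA (fun xs => takeA_ n xs)

/-- Cost-free monadic reversal (the `rev` whose cost is axiomatized to 0). -/
def revA_ {a : Type} : listA a → T (listA a) → M (listA a)
  | .NilA, acc => forcing acc ret
  | .ConsA x xs1, acc =>
      match xs1 with
      | .Thunk xs1' => revA_ xs1' (.Thunk (.ConsA x acc))
      | .Undefined => fun _ _ => False

def revA {a : Type} (xsA : T (listA a)) : M (listA a) :=
  forcing xsA (fun xs => revA_ xs (.Thunk .NilA))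

/-- Tail-recursive `take'` translated to the clairvoyance monad,
    with one tick per call and a zero-cost `rev`. -/
def take'A_ {a : Type} : T (listA a) → Nat → listA a → M (listA a)
  | ysA, 0, _ => tick >>! revA ysA
  | ysA, _ + 1, .NilA => tick >>! revA ysA
  | ysA, n + 1, .ConsA x xs1 =>
      tick >>! (match xs1 with
        | .Thunk xs1' => take'A_ (.Thunk (.ConsA x ysA)) n xs1'
        | .Undefined => fun _ _ => False)

end Clair

open Clair in
/-- Tick floats out of `thunk`, up to cost refinement: every run of
`thunk (tick >> u)` corresponds to a run of `tick >> thunk u` with the same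
value and a greater-or-equal cost; and every run of `thunk (tick >> u)` that
produces a `Thunk v` comes from a run of `u` on `v` (with one extra tick). -/
theorem thunk_tick {a : Type} (u : M a) :
    (∀ (x : T a) (nL : Nat), thunk (tick >>! u) x nL →
       ∃ nR : Nat, (tick >>! thunk u) x nR ∧ nL ≤ nR) ∧
    (∀ (v : a) (nL : Nat), thunk (tick >>! u) (T.Thunk v) nL →
       ∃ m : Nat, u v m ∧ nL = 1 + m) := by
  constructor
  · rintro (v | _) nL h
    · obtain ⟨x, nx, ny, ht, hu, hn⟩ := h
      exact ⟨nL, ⟨x, nx, ny, ht, hu, hn⟩, le_refl _⟩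
    · exact ⟨1, ⟨(), 1, 0, rfl, rfl, rfl⟩, by simp [thunk] at h; omega⟩
  · rintro v nL ⟨x, nx, ny, ht, hu, hn⟩
    exact ⟨ny, hu, by cases ht; omega⟩
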